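/- Let f ∈ B̂ with D, δ, tracts and fundamental domains fixed as in the context. Then every dynamic ray g of f is asymptotically contained in some fundamental domain: there exist a fundamental domain F and t₀ > 0 such that g(t) ∈ F for all t > t₀. -/

import Mathlib

open Filter Topology Set Metric

noncomputable section

/-- The set of critical values of `f`. -/
def criticalValues (f : ℂ → ℂ) : Set ℂ := {v | ∃ c : ℂ, deriv f c = 0 ∧ f c = v}

/-- The set of asymptotic values of `f`. -/
def asymptoticValues (f : ℂ → ℂ) : Set ℂ :=
  {a | ∃ γ : ℝ → ℂ, Continuous γ ∧ Tendsto (fun t => ‖γ t‖) atTop atTop ∧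
      Tendsto (fun t => f (γ t)) atTop (nhds a)}

/-- The set of singular values of `f`: the closure of the union of critical and
asymptotic values. -/
def singularValues (f : ℂ → ℂ) : Set ℂ := closure (criticalValues f ∪ asymptoticValues f)

/-- `f` is entire and transcendental (entire and not a polynomial). -/
def IsEntireTranscendental (f : ℂ → ℂ) : Prop :=
  Differentiable ℂ f ∧ ¬ ∃ p : Polynomial ℂ, f = fun z => p.eval z

/-- The Eremenko–Lyubich class `B`: entire transcendental maps with bounded singular set. -/
def ClassB (f : ℂ → ℂ) : Prop :=
  IsEntireTranscendental f ∧ Bornology.IsBounded (singularValues f)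

/-- `f` has finite order: `log log |f z| = O(log |z|)` as `|z| → ∞`. -/
def FiniteOrder (f : ℂ → ℂ) : Prop :=
  ∃ C R : ℝ, ∀ z : ℂ, R ≤ ‖z‖ → Real.log (Real.log ‖f z‖) ≤ C * Real.log ‖z‖

/-- The class `B̂`: finite compositions of finite-order maps of class `B`. -/
def ClassBhat (f : ℂ → ℂ) : Prop :=
  ∃ l : List (ℂ → ℂ), l ≠ [] ∧ (∀ g ∈ l, ClassB g ∧ FiniteOrder g) ∧
    f = l.foldr (fun g h => g ∘ h) id

/-- The escaping set of `f`. -/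
def escapingSet (f : ℂ → ℂ) : Set ℂ :=
  {z | Tendsto (fun n : ℕ => ‖f^[n] z‖) atTop atTop}

/-- The defining properties of a dynamic-ray curve `g` on the interval `(a, ∞)`:
it is an injective curve in the escaping set, every iterate tends to `∞` as `t → ∞`,
and the iterates tend to `∞` uniformly on each `[t₀, ∞)` with `t₀ > a`. -/
def RayProps (f : ℂ → ℂ) (g : ℝ → ℂ) (a : ℝ) : Prop :=
  ContinuousOn g (Ioi a) ∧ InjOn g (Ioi a) ∧
  (∀ t ∈ Ioi a, g t ∈ escapingSet f) ∧
  (∀ n : ℕ, Tendsto (fun t => ‖f^[n] (g t)‖) atTop atTop) ∧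
  (∀ t₀ ∈ Ioi a, ∀ M : ℝ, ∃ N : ℕ, ∀ n ≥ N, ∀ t ≥ t₀, M ≤ ‖f^[n] (g t)‖)

/-- A dynamic ray of `f`: a maximal curve `(a, ∞) → I(f)` with the ray properties;
`a > 0` only for broken rays, i.e. when the endpoint is a singular value or a
preimage of a singular value. -/
structure DynamicRay (f : ℂ → ℂ) where
  toFun : ℝ → ℂ
  a : ℝ
  a_nonneg : 0 ≤ a
  props : RayProps f toFun a
  maximal : ∀ b < a, ∀ h : ℝ → ℂ, EqOn h toFun (Ioi a) → RayProps f h b →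
      ∃ n : ℕ, f^[n] (h a) ∈ singularValues f
  broken : 0 < a → ∃ n : ℕ, f^[n] (toFun a) ∈ singularValues f

/-- The trace (image) of a dynamic ray. -/
def DynamicRay.image {f : ℂ → ℂ} (r : DynamicRay f) : Set ℂ := r.toFun '' Ioi r.a

/-- A ray lands at `z₀` if it is unbroken and `g(t) → z₀` as `t → 0⁺`. -/
def DynamicRay.Lands {f : ℂ → ℂ} (r : DynamicRay f) (z₀ : ℂ) : Prop :=
  r.a = 0 ∧ Tendsto r.toFun (nhdsWithin 0 (Ioi 0)) (nhds z₀)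

/-- A ray is fixed if `f(g) ⊆ g`. -/
def DynamicRay.IsFixed {f : ℂ → ℂ} (r : DynamicRay f) : Prop := f '' r.image ⊆ r.image

/-- A ray is invariant under `f^p` (`p`-periodic) if `f^p(g) ⊆ g`. -/
def DynamicRay.IsInvariant {f : ℂ → ℂ} (r : DynamicRay f) (p : ℕ) : Prop :=
  f^[p] '' r.image ⊆ r.image

/-- Every fixed ray of `f` lands. -/
def AllFixedRaysLand (f : ℂ → ℂ) : Prop :=
  ∀ r : DynamicRay f, r.IsFixed → ∃ z : ℂ, r.Lands z

/-- Every periodic ray of `f` lands. -/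
def AllPeriodicRaysLand (f : ℂ → ℂ) : Prop :=
  ∀ p : ℕ, 1 ≤ p → ∀ r : DynamicRay f, r.IsInvariant p → ∃ z : ℂ, r.Lands z

/-- A fixed ray lands alone at a repelling fixed point: it lands at a repelling
fixed point at which no other fixed ray lands. -/
def LandsAloneAtRepelling (f : ℂ → ℂ) (r : DynamicRay f) : Prop :=
  ∃ z : ℂ, r.Lands z ∧ f z = z ∧ 1 < ‖deriv f z‖ ∧
    ∀ r' : DynamicRay f, r'.IsFixed → r'.Lands z → r'.image = r.image

/-- The graph `Γ`: the union of all fixed rays together with their landing points. -/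
def fixedRayGraph (f : ℂ → ℂ) : Set ℂ :=
  {w | ∃ r : DynamicRay f, r.IsFixed ∧ (w ∈ r.image ∨ r.Lands w)}

/-- A basic region: a connected component of the complement of `Γ`. -/
def IsBasicRegion (f : ℂ → ℂ) (V : Set ℂ) : Prop :=
  ∃ z ∈ (fixedRayGraph f)ᶜ, V = connectedComponentIn (fixedRayGraph f)ᶜ z

/-- The graph `Γ_p`: the union of all rays invariant under `f^p` together with their
landing points. -/
def periodicRayGraph (f : ℂ → ℂ) (p : ℕ) : Set ℂ :=
  {w | ∃ r : DynamicRay f, r.IsInvariant p ∧ (w ∈ r.image ∨ r.Lands w)}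

/-- A basic region for `f^p`: a connected component of the complement of `Γ_p`. -/
def IsBasicRegionPer (f : ℂ → ℂ) (p : ℕ) (V : Set ℂ) : Prop :=
  ∃ z ∈ (periodicRayGraph f p)ᶜ, V = connectedComponentIn (periodicRayGraph f p)ᶜ z

/-- An interior fixed point: a fixed point at which no fixed ray lands. -/
def InteriorFixedPoint (f : ℂ → ℂ) (z : ℂ) : Prop :=
  f z = z ∧ ∀ r : DynamicRay f, r.IsFixed → ¬ r.Lands z

/-- An interior `p`-periodic point: a fixed point of `f^p` at which no ray invariant
under `f^p` lands. -/
def InteriorPeriodicPoint (f : ℂ → ℂ) (p : ℕ) (z : ℂ) : Prop :=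
  f^[p] z = z ∧ ∀ r : DynamicRay f, r.IsInvariant p → ¬ r.Lands z

/-- The parabolic basin of the fixed point `z₀`. -/
def parabolicBasin (f : ℂ → ℂ) (z₀ : ℂ) : Set ℂ :=
  {z | Tendsto (fun n : ℕ => f^[n] z) atTop (nhds z₀) ∧ ∀ n : ℕ, f^[n] z ≠ z₀}

/-- A virtual fixed point: an `f`-invariant connected component of the parabolic
basin of a multiple fixed point (an immediate parabolic basin). -/
def IsVirtualFixedPoint (f : ℂ → ℂ) (U : Set ℂ) : Prop :=
  ∃ z₀ : ℂ, f z₀ = z₀ ∧ deriv f z₀ = 1 ∧ f ≠ id ∧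
    (∃ z ∈ parabolicBasin f z₀, U = connectedComponentIn (parabolicBasin f z₀) z) ∧
    f '' U ⊆ U

/-- A virtual `p`-periodic point: an `f^p`-invariant immediate parabolic basin of a
parabolic point fixed by `f^p` with `(f^p)'(z₀) = 1`. -/
def IsVirtualPeriodicPoint (f : ℂ → ℂ) (p : ℕ) (U : Set ℂ) : Prop :=
  ∃ z₀ : ℂ, f^[p] z₀ = z₀ ∧ deriv (f^[p]) z₀ = 1 ∧
    (∃ z ∈ parabolicBasin (f^[p]) z₀,
      U = connectedComponentIn (parabolicBasin (f^[p]) z₀) z) ∧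
    f^[p] '' U ⊆ U

/-- The multiplicity of `z` as a fixed point of `f`: its order as a zero of `f(w) - w`. -/
noncomputable def fixedPointOrder (f : ℂ → ℂ) (z : ℂ) : ℕ := by
  classical exact if h : AnalyticAt ℂ (fun w => f w - w) z then (analyticOrderAt (fun w => f w - w) z).toNat else 0

/-- A Jordan domain: a bounded connected open set whose frontier is a Jordan curve. -/
def IsJordanDomain (D : Set ℂ) : Prop :=
  IsOpen D ∧ IsConnected D ∧ Bornology.IsBounded D ∧
  ∃ γ : ℂ → ℂ, ContinuousOn γ (sphere (0:ℂ) 1) ∧ InjOn γ (sphere (0:ℂ) 1) ∧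
    γ '' sphere (0:ℂ) 1 = frontier D

/-- The frontier of `D` is a real-analytic Jordan curve. -/
def HasAnalyticBoundary (D : Set ℂ) : Prop :=
  ∃ γ : ℂ → ℂ, AnalyticOnNhd ℂ γ (sphere (0:ℂ) 1) ∧ InjOn γ (sphere (0:ℂ) 1) ∧
    γ '' sphere (0:ℂ) 1 = frontier D

/-- The union `𝒯` of all tracts: the preimage of the complement of `D̄`. -/
def tractSet (f : ℂ → ℂ) (D : Set ℂ) : Set ℂ := f ⁻¹' (closure D)ᶜ

/-- A tract of `f`: a connected component of `𝒯`. -/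
def IsTract (f : ℂ → ℂ) (D : Set ℂ) (T : Set ℂ) : Prop :=
  ∃ z ∈ tractSet f D, T = connectedComponentIn (tractSet f D) z

/-- `δ` is an admissible cut curve: a simple curve in `ℂ \ (D̄ ∪ 𝒯̄)` connecting
`∂D` to infinity. -/
def IsAdmissibleDelta (f : ℂ → ℂ) (D : Set ℂ) (δ : Set ℂ) : Prop :=
  ∃ c : ℝ → ℂ, ContinuousOn c (Ici 0) ∧ InjOn c (Ici 0) ∧ c 0 ∈ frontier D ∧
    (∀ t : ℝ, 0 < t → c t ∈ (closure D ∪ closure (tractSet f D))ᶜ) ∧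
    Tendsto (fun t => ‖c t‖) atTop atTop ∧ δ = c '' Ici 0

/-- A fundamental domain of `f` (relative to `D` and `δ`): a connected component of
`𝒯 \ f⁻¹(δ)`. -/
def IsFundamentalDomain (f : ℂ → ℂ) (D δ : Set ℂ) (F : Set ℂ) : Prop :=
  ∃ z ∈ tractSet f D \ f ⁻¹' δ, F = connectedComponentIn (tractSet f D \ f ⁻¹' δ) z

/-- A ray is asymptotically contained in `F` if `g(t) ∈ F` for all sufficiently large `t`. -/
def AsympContained {f : ℂ → ℂ} (r : DynamicRay f) (F : Set ℂ) : Prop :=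
  ∃ t₀ : ℝ, ∀ t : ℝ, t₀ < t → r.toFun t ∈ F

/-!
Since `f` and `f²` tend to `∞` along a ray `g`, for large `t` both `f (g t)` and `f² (g t)` lie
outside `D̄`, i.e. `f (g t) ∈ 𝒯 \ D̄`. The cut `δ` can meet `𝒯` only at its endpoint on `∂D ⊆ D̄`, so the tail
of `g` avoids `f⁻¹(δ)`; being connected, it lies in a single fundamental domain.
-/

theorem Filter.Tendsto.eventually_notMem_of_isBounded {α E : Type*} [SeminormedAddCommGroup E]
    {l : Filter α} {u : α → E} {K : Set E} (hu : Tendsto (fun x => ‖u x‖) l atTop)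
    (hK : Bornology.IsBounded K) : ∀ᶠ x in l, u x ∉ K :=
  (tendsto_norm_atTop_iff_cobounded.1 hu).eventually hK

theorem ContinuousOn.mem_connectedComponentIn_of_forall_gt {X : Type*} [TopologicalSpace X]
    {g : ℝ → X} {a T : ℝ} {U : Set X} (hg : ContinuousOn g (Ioi a)) (haT : a ≤ T)
    (hU : ∀ t, T < t → g t ∈ U) (t : ℝ) (ht : T < t) :
    g t ∈ connectedComponentIn U (g (T + 1)) :=
  (isPreconnected_Ioi.image g (hg.mono (Ioi_subset_Ioi haT))).subset_connectedComponentIn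
    ⟨T + 1, lt_add_one T, rfl⟩ (by rintro _ ⟨s, hs, rfl⟩; exact hU s hs) ⟨t, ht, rfl⟩

theorem IsAdmissibleDelta.notMem_of_mem_tractSet {f : ℂ → ℂ} {D δ : Set ℂ}
    (hδ : IsAdmissibleDelta f D δ) {w : ℂ} (hw : w ∈ tractSet f D) (hwD : w ∉ closure D) :
    w ∉ δ := by
  obtain ⟨c, -, -, hc0, hcout, -, rfl⟩ := hδ
  rintro ⟨s, hs, rfl⟩
  rcases (mem_Ici.1 hs).eq_or_lt with rfl | hs
  · exact hwD (frontier_subset_closure hc0)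
  · exact hcout s hs (Or.inr (subset_closure hw))

theorem IsAdmissibleDelta.mem_tractSet_diff_preimage {f : ℂ → ℂ} {D δ : Set ℂ}
    (hδ : IsAdmissibleDelta f D δ) {z : ℂ} (h₁ : f z ∉ closure D) (h₂ : f (f z) ∉ closure D) :
    z ∈ tractSet f D \ f ⁻¹' δ :=
  ⟨h₁, hδ.notMem_of_mem_tractSet h₂ h₁⟩

theorem ray_asymptotically_contained_general (f : ℂ → ℂ) (D : Set ℂ)
    (hD : IsJordanDomain D)
    (δ : Set ℂ) (hδ : IsAdmissibleDelta f D δ) :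
    ∀ r : DynamicRay f, ∃ (F : Set ℂ) (t₀ : ℝ), 0 < t₀ ∧
      IsFundamentalDomain f D δ F ∧ ∀ t : ℝ, t₀ < t → r.toFun t ∈ F := by
  intro r
  obtain ⟨hcont, -, -, htend, -⟩ := r.props
  have hbdd : Bornology.IsBounded (closure D) := hD.2.2.1.closure
  have htail : ∀ᶠ t in atTop, 0 < t ∧ r.a < t ∧ r.toFun t ∈ tractSet f D \ f ⁻¹' δ := by
    filter_upwards [eventually_gt_atTop 0, eventually_gt_atTop r.a,
      (htend 1).eventually_notMem_of_isBounded hbdd,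
      (htend 2).eventually_notMem_of_isBounded hbdd] with t ht0 hta h₁ h₂
    exact ⟨ht0, hta, hδ.mem_tractSet_diff_preimage h₁ h₂⟩
  obtain ⟨T, hT⟩ := htail.exists_forall_of_atTop
  obtain ⟨hT0, hTa, -⟩ := hT T le_rfl
  have hU : ∀ t, T < t → r.toFun t ∈ tractSet f D \ f ⁻¹' δ := fun t ht => (hT t ht.le).2.2
  exact ⟨_, T, hT0, ⟨_, hU (T + 1) (lt_add_one T), rfl⟩,
    hcont.mem_connectedComponentIn_of_forall_gt hTa.le hU⟩

/-- Every dynamic ray is asymptotically contained in some fundamental domain. -/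
theorem ray_asymptotically_contained (f : ℂ → ℂ) (hf : ClassBhat f) (D : Set ℂ)
    (hD : IsJordanDomain D) (hsing : singularValues f ⊆ D)
    (h0 : (0:ℂ) ∈ D) (hf0 : f 0 ∈ D)
    (δ : Set ℂ) (hδ : IsAdmissibleDelta f D δ) :
    ∀ r : DynamicRay f, ∃ (F : Set ℂ) (t₀ : ℝ), 0 < t₀ ∧
      IsFundamentalDomain f D δ F ∧ ∀ t : ℝ, t₀ < t → r.toFun t ∈ F :=
  ray_asymptotically_contained_general f D hD δ hδ
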